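/- (A determinant-evaluation-type identity used in the proofs, a special case of Milne's Lemma 3.12.) Let 0<|q|<1, r ≥ 1, let n_1,…,n_r be integers with |n| := n_1+⋯+n_r, and let c_1,…,c_r, x_1,…,x_r be nonzero complex numbers such that c_i q^{n_i}/x_i ≠ c_j q^{n_j}/x_j for all i ≠ j. Then ∏_{i,j=1}^r (q^{1+n_j−n_i} c_j x_i/(c_i x_j))_{n_i−n_j} = (−1)^{(r−1)|n|} · q^{binom(|n|,2) − r·∑_{i=1}^r binom(n_i,2)} · ∏_{i=1}^r (c_i/x_i)^{|n|−r n_i} · ∏_{1≤i<j≤r} [(c_i/x_i − c_j/x_j)/(c_i q^{n_i}/x_i − c_j q^{n_j}/x_j)], where binom(m,2) = m(m−1)/2. -/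

import Mathlib

open scoped BigOperators

/-- The infinite q-shifted factorial `(a; q)_∞ = ∏_{j≥0} (1 - a qʲ)`. -/
noncomputable def qPI (q a : ℂ) : ℂ := ∏' j : ℕ, (1 - a * q ^ j)

/-- The q-shifted factorial `(a; q)_k = (a;q)_∞ / (a qᵏ; q)_∞` for `k : ℤ`. -/
noncomputable def qP (q a : ℂ) (k : ℤ) : ℂ := qPI q a / qPI q (a * q ^ k)

/-- `binom(m, 2) = m (m-1) / 2` for an integer `m` (an exact division). -/
def ch2 (m : ℤ) : ℤ := m * (m - 1) / 2

section helpers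

lemma hasProd_zero_of_exists_zero {f : ℕ → ℂ} (h : ∃ j, f j = 0) : HasProd f 0 := by
  obtain ⟨j0, hj0⟩ := h
  have hev : ∀ᶠ s : Finset ℕ in Filter.atTop, ∏ i ∈ s, f i = 0 := by
    filter_upwards [Filter.eventually_ge_atTop {j0}] with s hs
    exact Finset.prod_eq_zero (hs (Finset.mem_singleton_self j0)) hj0
  exact Filter.Tendsto.congr' (hev.mono fun s hs => hs.symm) tendsto_const_nhds

lemma multipliable_qPI (q a : ℂ) (hq1 : ‖q‖ < 1) :
    Multipliable (fun j : ℕ => 1 - a * q ^ j) := by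
  by_cases hz : ∃ j, (1 : ℂ) - a * q ^ j = 0
  · exact ⟨0, hasProd_zero_of_exists_zero hz⟩
  push_neg at hz
  apply Complex.multipliable_of_summable_log
  have hsum : Summable (fun n : ℕ => (3/2 : ℝ) * (‖a‖ * ‖q‖ ^ n)) := by
    apply Summable.mul_left
    exact (summable_geometric_of_lt_one (norm_nonneg q) hq1).mul_left _
  apply Summable.of_norm_bounded_eventually_nat hsum
  have htend : Filter.Tendsto (fun n : ℕ => ‖a‖ * ‖q‖ ^ n)
      Filter.atTop (nhds 0) := by
    simpa using (tendsto_pow_atTop_nhds_zero_of_lt_one (norm_nonneg q) hq1).const_mul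
      (‖a‖)
  filter_upwards [htend.eventually_le_const (by norm_num : (0:ℝ) < 1/2)] with n hn
  have h2 : ‖-(a * q ^ n)‖ ≤ 1/2 := by
    simpa [map_mul, map_pow] using hn
  calc ‖Complex.log (1 - a * q ^ n)‖ = ‖Complex.log (1 + -(a * q ^ n))‖ := by ring_nf
    _ ≤ (3/2) * ‖-(a * q ^ n)‖ := Complex.norm_log_one_add_half_le_self h2
    _ = (3/2) * (‖a‖ * ‖q‖ ^ n) := by
        simp [norm_mul, norm_pow]

lemma qPI_rec (q a : ℂ) (hq1 : ‖q‖ < 1) :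
    qPI q a = (1 - a) * qPI q (a * q) := by
  have hfun : ∀ n : ℕ, (1 : ℂ) - a * q ^ (n + 1) = 1 - (a * q) * q ^ n := by
    intro n; rw [pow_succ]; ring
  have hm : Multipliable (fun n : ℕ => (1 : ℂ) - a * q ^ (n + 1)) :=
    (multipliable_qPI q (a * q) hq1).congr fun n => (hfun n).symm
  have h1 : qPI q a = (1 - a * q ^ (0:ℕ)) * ∏' n : ℕ, (1 - a * q ^ (n + 1)) :=
    tprod_eq_zero_mul' hm
  rw [h1, pow_zero, mul_one]
  congr 1
  exact tprod_congr hfun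

lemma qPI_eq_zero {q a : ℂ} (j : ℕ) (h : a * q ^ j = 1) : qPI q a = 0 :=
  (hasProd_zero_of_exists_zero ⟨j, by rw [h]; ring⟩).tprod_eq

lemma two_mul_ch2 (m : ℤ) : 2 * ch2 m = m * (m - 1) := by
  have h : (2:ℤ) ∣ m * (m - 1) := by
    rcases Int.even_or_odd m with he | ho
    · exact Dvd.dvd.mul_right he.two_dvd _
    · exact Dvd.dvd.mul_left (Int.even_sub_one.mpr (Int.not_even_iff_odd.mpr ho)).two_dvd _
  rw [ch2, Int.mul_ediv_cancel' h]

lemma ch2_succ (m : ℤ) : ch2 (m + 1) = ch2 m + m := by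
  have h2 : (2:ℤ) ≠ 0 := by norm_num
  apply mul_left_cancel₀ h2
  rw [two_mul_ch2, mul_add, two_mul_ch2]; ring

lemma ch2_pred (m : ℤ) : ch2 (m - 1) = ch2 m - (m - 1) := by
  have h := ch2_succ (m - 1)
  rw [sub_add_cancel] at h
  omega

lemma key_telescope (q u : ℂ) (hq : q ≠ 0) (hq1 : ‖q‖ < 1) (hu : u ≠ 0)
    (h1 : qPI q (q * u) ≠ 0) (h2 : qPI q (q * u⁻¹) ≠ 0) (m : ℤ) :
    qPI q (q ^ (1 - m) * u) * qPI q (q ^ (1 + m) * u⁻¹) * (q ^ m - u) * q ^ ch2 m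
    = (-1 : ℂ) ^ m * u ^ m * (1 - u) * (qPI q (q * u) * qPI q (q * u⁻¹)) := by
  have hm1 : (-1 : ℂ) ≠ 0 := by norm_num
  induction m using Int.induction_on with
  | zero =>
      norm_num [ch2]
      ring
  | succ i ih =>
      set m : ℤ := (i : ℤ) with hmdef
      have hAA : q ^ m * q ^ (-m) = 1 := by
        rw [← zpow_add₀ hq]; simp
      have hqm : q ^ m ≠ 0 := zpow_ne_zero m hq
      have hF : u - q * q ^ m ≠ 0 := by
        intro hcon
        apply h2
        apply qPI_eq_zero (j := i)
        have hu' : u = q * q ^ m := sub_eq_zero.mp hcon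
        rw [hu', ← zpow_natCast q i, ← hmdef]
        field_simp
      -- recursions
      have r1'' : qPI q (q ^ (-m) * u) = (1 - q ^ (-m) * u) * qPI q (q ^ (1 - m) * u) := by
        rw [qPI_rec q (q ^ (-m) * u) hq1]
        congr 2
        rw [show (1 : ℤ) - m = -m + 1 by ring, zpow_add₀ hq, zpow_one]
        ring
      have r1' : q ^ m * qPI q (q ^ (-m) * u) = (q ^ m - u) * qPI q (q ^ (1 - m) * u) := by
        rw [r1'']
        linear_combination (-(u * qPI q (q ^ (1 - m) * u))) * hAA
      have huu : u * u⁻¹ = 1 := mul_inv_cancel₀ hu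
      have r2'' : qPI q (q ^ (1 + m) * u⁻¹)
          = (1 - q ^ (1 + m) * u⁻¹) * qPI q (q ^ (2 + m) * u⁻¹) := by
        rw [qPI_rec q (q ^ (1 + m) * u⁻¹) hq1,
          show q ^ (1 + m) * u⁻¹ * q = q ^ (2 + m) * u⁻¹ from by
            rw [show (2 : ℤ) + m = (1 + m) + 1 by ring, zpow_add_one₀ hq]; ring]
      have hq1m : q ^ (1 + m) = q * q ^ m := by
        rw [zpow_add₀ hq, zpow_one]
      have r2' : (u - q * q ^ m) * qPI q (q ^ (2 + m) * u⁻¹)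
          = u * qPI q (q ^ (1 + m) * u⁻¹) := by
        rw [r2'', hq1m]
        linear_combination (q * q ^ m * qPI q (q ^ (2 + m) * u⁻¹)) * huu
      -- rewrite the goal exponents
      rw [show (1 : ℤ) - (m + 1) = -m by ring, show (1 : ℤ) + (m + 1) = 2 + m by ring,
        ch2_succ, zpow_add₀ hq (ch2 m) m, zpow_add_one₀ hq, zpow_add_one₀ hm1,
        zpow_add_one₀ hu]
      apply mul_left_cancel₀ hF
      linear_combination (qPI q (q ^ (-m) * u) * (q * q ^ m - u) * q ^ ch2 m * q ^ m) * r2'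
        + (u * qPI q (q ^ (1 + m) * u⁻¹) * (q * q ^ m - u) * q ^ ch2 m) * r1'
        + (u * (q * q ^ m - u)) * ih
  | pred i ih =>
      set m : ℤ := (i : ℤ) with hmdef
      have hAA : q ^ m * q ^ (-m) = 1 := by
        rw [← zpow_add₀ hq]; simp
      have hF : (1 : ℂ) - q * q ^ m * u ≠ 0 := by
        intro hcon
        apply h1
        apply qPI_eq_zero (j := i)
        have hu' : q * q ^ m * u = 1 := by
          have := sub_eq_zero.mp hcon; linear_combination -this
        rw [← zpow_natCast q i, ← hmdef]
        linear_combination hu'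
      have hM : u * q * ((1 : ℂ) - q * q ^ m * u) ≠ 0 :=
        mul_ne_zero (mul_ne_zero hu hq) hF
      have huu : u * u⁻¹ = 1 := mul_inv_cancel₀ hu
      have hq1m : q ^ (1 + m) = q * q ^ m := by rw [zpow_add₀ hq, zpow_one]
      have r1 : qPI q (q ^ (1 + m) * u) = (1 - q * q ^ m * u) * qPI q (q ^ (2 + m) * u) := by
        rw [qPI_rec q (q ^ (1 + m) * u) hq1,
          show q ^ (1 + m) * u * q = q ^ (2 + m) * u from by
            rw [show (2 : ℤ) + m = (1 + m) + 1 by ring, zpow_add_one₀ hq]; ring, hq1m]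
      have r2 : qPI q (q ^ (-m) * u⁻¹) = (1 - q ^ (-m) * u⁻¹) * qPI q (q ^ (1 - m) * u⁻¹) := by
        rw [qPI_rec q (q ^ (-m) * u⁻¹) hq1,
          show q ^ (-m) * u⁻¹ * q = q ^ (1 - m) * u⁻¹ from by
            rw [show (1 : ℤ) - m = -m + 1 by ring, zpow_add_one₀ hq]; ring]
      have r2' : u * q ^ m * qPI q (q ^ (-m) * u⁻¹)
          = (u * q ^ m - 1) * qPI q (q ^ (1 - m) * u⁻¹) := by
        rw [r2]
        linear_combination (-(qPI q (q ^ (1 - m) * u⁻¹))) * hAA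
          + (-(qPI q (q ^ (1 - m) * u⁻¹) * q ^ m * q ^ (-m))) * huu
      have hq2 : q ^ (-m - 1) * q = q ^ (-m) := by
        rw [← zpow_add_one₀ hq]; ring_nf
      have hu2 : u ^ (-m - 1) * u = u ^ (-m) := by
        rw [← zpow_add_one₀ hu]; ring_nf
      have hs2 : (-1 : ℂ) ^ (-m - 1) * (-1) = (-1 : ℂ) ^ (-m) := by
        rw [← zpow_add_one₀ hm1]; ring_nf
      have hch : ch2 (-m - 1) = ch2 (-m) + m + 1 := by
        have h := ch2_pred (-m); omega
      rw [show (1 : ℤ) - -m = 1 + m by ring, show (1 : ℤ) + -m = 1 - m by ring] at ih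
      rw [show (1 : ℤ) - (-m - 1) = 2 + m by ring, show (1 : ℤ) + (-m - 1) = -m by ring,
        hch, show ch2 (-m) + m + 1 = (ch2 (-m) + m) + 1 by ring, zpow_add_one₀ hq,
        zpow_add₀ hq (ch2 (-m)) m]
      apply mul_left_cancel₀ hM
      linear_combination
        (-(u * q * qPI q (q ^ (-m) * u⁻¹) * (q ^ (-m - 1) - u) * q ^ ch2 (-m) * q ^ m * q)) * r1
        + (q * qPI q (q ^ (1 + m) * u) * (q ^ (-m - 1) - u) * q ^ ch2 (-m) * q) * r2'
        + (qPI q (q ^ (1 + m) * u) * q ^ ch2 (-m) * (u * q ^ m - 1)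
            * qPI q (q ^ (1 - m) * u⁻¹) * q) * hq2
        + (-(q * (1 - q * q ^ m * u) * (-1 : ℂ) ^ (-m - 1) * (1 - u)
            * (qPI q (q * u) * qPI q (q * u⁻¹)))) * hu2
        + (q * (1 - q * q ^ m * u) * u ^ (-m) * (1 - u)
            * (qPI q (q * u) * qPI q (q * u⁻¹))) * hs2
        + (-(q * (1 - q * q ^ m * u))) * ih
        + (q * qPI q (q ^ (1 + m) * u) * qPI q (q ^ (1 - m) * u⁻¹) * q ^ ch2 (-m) * u
            * (1 - q)) * hAA

lemma split_prod {M : Type*} [CommMonoid M] {r : ℕ} (f : Fin r → Fin r → M) :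
    ∏ i, ∏ j, f i j
    = (∏ i, ∏ j, if i < j then f i j * f j i else 1) * ∏ i, f i i := by
  have h : ∀ i j : Fin r, f i j
      = (if i < j then f i j else 1) * (if j < i then f i j else 1)
        * (if i = j then f i j else 1) := by
    intro i j
    rcases lt_trichotomy i j with h | h | h
    · simp [h, h.ne, (not_lt_of_gt h)]
    · simp [h]
    · simp [h, (not_lt_of_gt h), (ne_of_lt h).symm]
  calc ∏ i, ∏ j, f i j
      = ∏ i, ∏ j, ((if i < j then f i j else 1) * (if j < i then f i j else 1)
          * (if i = j then f i j else 1)) := by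
        exact Finset.prod_congr rfl fun i _ => Finset.prod_congr rfl fun j _ => h i j
    _ = ((∏ i, ∏ j, if i < j then f i j else 1) * (∏ i, ∏ j, if j < i then f i j else 1))
        * (∏ i, ∏ j, if i = j then f i j else 1) := by
        simp only [Finset.prod_mul_distrib]
    _ = (∏ i, ∏ j, if i < j then f i j * f j i else 1) * ∏ i, f i i := by
      congr 1
      · rw [Finset.prod_comm (f := fun i j => if j < i then f i j else 1)]
        rw [← Finset.prod_mul_distrib]
        refine Finset.prod_congr rfl fun i _ => ?_
        rw [← Finset.prod_mul_distrib]
        refine Finset.prod_congr rfl fun j _ => ?_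
        split <;> simp
      · refine Finset.prod_congr rfl fun i _ => ?_
        simp

lemma split_sum {M : Type*} [AddCommMonoid M] {r : ℕ} (f : Fin r → Fin r → M) :
    ∑ i, ∑ j, f i j
    = (∑ i, ∑ j, if i < j then f i j + f j i else 0) + ∑ i, f i i := by
  have h : ∀ i j : Fin r, f i j
      = (if i < j then f i j else 0) + (if j < i then f i j else 0)
        + (if i = j then f i j else 0) := by
    intro i j
    rcases lt_trichotomy i j with h | h | h
    · simp [h, h.ne, (not_lt_of_gt h)]
    · simp [h]
    · simp [h, (not_lt_of_gt h), (ne_of_lt h).symm]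
  calc ∑ i, ∑ j, f i j
      = ∑ i, ∑ j, ((if i < j then f i j else 0) + (if j < i then f i j else 0)
          + (if i = j then f i j else 0)) := by
        exact Finset.sum_congr rfl fun i _ => Finset.sum_congr rfl fun j _ => h i j
    _ = ((∑ i, ∑ j, if i < j then f i j else 0) + (∑ i, ∑ j, if j < i then f i j else 0))
        + (∑ i, ∑ j, if i = j then f i j else 0) := by
        simp only [Finset.sum_add_distrib]
    _ = (∑ i, ∑ j, if i < j then f i j + f j i else 0) + ∑ i, f i i := by
      congr 1
      · rw [Finset.sum_comm (f := fun i j => if j < i then f i j else 0)]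
        rw [← Finset.sum_add_distrib]
        refine Finset.sum_congr rfl fun i _ => ?_
        rw [← Finset.sum_add_distrib]
        refine Finset.sum_congr rfl fun j _ => ?_
        split <;> simp
      · refine Finset.sum_congr rfl fun i _ => ?_
        simp

lemma zpow_prod {ι : Type*} (b : ℂ) (hb : b ≠ 0) (s : Finset ι) (f : ι → ℤ) :
    ∏ i ∈ s, b ^ f i = b ^ (∑ i ∈ s, f i) := by
  classical
  induction s using Finset.induction_on with
  | empty => simp
  | insert _ _ hnotmem ih =>
      rw [Finset.prod_insert hnotmem, Finset.sum_insert hnotmem, zpow_add₀ hb, ih]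

lemma ite_zpow (b : ℂ) (P : Prop) [Decidable P] (e : ℤ) :
    (if P then b ^ e else 1) = b ^ (if P then e else 0) := by
  split <;> simp

lemma two_sum_lt {r : ℕ} (F : Fin r → Fin r → ℤ) (hsym : ∀ i j, F i j = F j i) :
    2 * (∑ i, ∑ j, if i < j then F i j else 0)
    = (∑ i, ∑ j, F i j) - ∑ i, F i i := by
  have h := split_sum F
  have h2 : (∑ i, ∑ j, if i < j then F i j + F j i else 0)
      = 2 * ∑ i, ∑ j, if i < j then F i j else 0 := by
    rw [Finset.mul_sum]
    refine Finset.sum_congr rfl fun i _ => ?_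
    rw [Finset.mul_sum]
    refine Finset.sum_congr rfl fun j _ => ?_
    split
    · rw [hsym j i]; ring
    · ring
  omega

lemma const_sum {r : ℕ} (c : ℤ) : ∑ _j : Fin r, c = (r : ℤ) * c := by
  rw [Finset.sum_const, Finset.card_univ, Fintype.card_fin, nsmul_eq_mul]

lemma sum_lt_add {r : ℕ} (n : Fin r → ℤ) :
    (∑ i, ∑ j, if i < j then n i + n j else 0) = ((r : ℤ) - 1) * ∑ t, n t := by
  apply mul_left_cancel₀ (show (2:ℤ) ≠ 0 by norm_num)
  rw [two_sum_lt _ (fun i j => by ring)]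
  have h0 : ∀ i : Fin r, ∑ j, (n i + n j) = (r : ℤ) * n i + ∑ t, n t := fun i => by
    rw [Finset.sum_add_distrib, const_sum (n i)]
  have h1 : ∑ i : Fin r, ∑ j, (n i + n j)
      = (r : ℤ) * (∑ t, n t) + (r : ℤ) * ∑ t, n t := by
    rw [Finset.sum_congr rfl fun i _ => h0 i, Finset.sum_add_distrib, ← Finset.mul_sum,
      const_sum]
  have h2 : ∑ i : Fin r, (n i + n i) = 2 * ∑ t, n t := by
    rw [Finset.sum_add_distrib]; ring
  rw [h1, h2]; ring

lemma sum_lt_q {r : ℕ} (n : Fin r → ℤ) :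
    (∑ i, ∑ j, if i < j then n j - ch2 (n i - n j) else 0)
    = ch2 (∑ t, n t) - (r : ℤ) * ∑ i, ch2 (n i) := by
  set N := ∑ t, n t with hN
  set Q := ∑ t, (n t) ^ 2 with hQ
  set F : Fin r → Fin r → ℤ :=
    fun i j => n i + n j - (n i)^2 - (n j)^2 + 2 * n i * n j with hF
  set S := ∑ i, ∑ j, if i < j then n j - ch2 (n i - n j) else 0 with hS
  have hA : 2 * S = ∑ i, ∑ j, if i < j then F i j else 0 := by
    rw [hS, Finset.mul_sum]
    refine Finset.sum_congr rfl fun i _ => ?_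
    rw [Finset.mul_sum]
    refine Finset.sum_congr rfl fun j _ => ?_
    split
    · rw [mul_sub, two_mul_ch2]; ring
    · ring
  have hB := two_sum_lt F (fun i j => by simp only [hF]; ring)
  have hC : ∑ i, ∑ j, F i j = 2 * (r:ℤ) * N - 2 * (r:ℤ) * Q + 2 * N * N := by
    have hin : ∀ i : Fin r, ∑ j, F i j
        = (r:ℤ) * n i + N - (r:ℤ) * (n i)^2 - Q + 2 * n i * N := by
      intro i
      simp only [hF]
      rw [Finset.sum_add_distrib, Finset.sum_sub_distrib, Finset.sum_sub_distrib,
        Finset.sum_add_distrib, const_sum (n i), const_sum ((n i)^2), ← hN, ← hQ,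
        ← Finset.mul_sum, ← hN]
    calc ∑ i, ∑ j, F i j
        = ∑ i : Fin r, ((r:ℤ) * n i + N - (r:ℤ)*(n i)^2 - Q + 2*(n i)*N) :=
          Finset.sum_congr rfl fun i _ => hin i
      _ = 2 * (r:ℤ) * N - 2 * (r:ℤ) * Q + 2 * N * N := by
          rw [Finset.sum_add_distrib, Finset.sum_sub_distrib, Finset.sum_sub_distrib,
            Finset.sum_add_distrib, ← Finset.mul_sum, ← Finset.mul_sum, const_sum N,
            const_sum Q, ← Finset.sum_mul, ← Finset.mul_sum, ← hN]
          ring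
  have hD : ∑ i, F i i = 2 * N := by
    have h' : ∀ i : Fin r, F i i = 2 * n i := by intro i; simp only [hF]; ring
    rw [Finset.sum_congr rfl fun i _ => h' i, ← Finset.mul_sum]
  have h2N : 2 * ch2 N = N * (N - 1) := two_mul_ch2 N
  have hq2 : 2 * ∑ i, ch2 (n i) = Q - N := by
    rw [Finset.mul_sum, Finset.sum_congr rfl fun i _ => two_mul_ch2 (n i), hQ, hN,
      ← Finset.sum_sub_distrib]
    exact Finset.sum_congr rfl fun i _ => by ring
  apply mul_left_cancel₀ (show (4:ℤ) ≠ 0 by norm_num)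
  linear_combination 2 * hA + hB + hC - hD - 2 * h2N + 2 * (r:ℤ) * hq2

lemma exp_y {r : ℕ} (n : Fin r → ℤ) (k : Fin r) :
    ((∑ t, if t < k then n t - n k else 0) + (∑ t, if k < t then n t - n k else 0))
    = (∑ t, n t) - (r : ℤ) * n k := by
  rw [← Finset.sum_add_distrib]
  have h : ∀ t : Fin r, ((if t < k then n t - n k else 0) + (if k < t then n t - n k else 0))
      = n t - n k := by
    intro t
    rcases lt_trichotomy t k with h | h | h
    · simp [h, not_lt_of_gt h]
    · subst h; simp
    · simp [h, not_lt_of_gt h]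
  rw [Finset.sum_congr rfl fun t _ => h t, Finset.sum_sub_distrib, const_sum (n k)]

end helpers

/-- A determinant-evaluation-type identity (a special case of Milne's
Lemma 3.12). -/
theorem milne_lemma312 (q : ℂ) (r : ℕ) (hr : 1 ≤ r)
    (n : Fin r → ℤ) (c x : Fin r → ℂ)
    (hq : q ≠ 0) (hq1 : ‖q‖ < 1)
    (hc : ∀ i, c i ≠ 0) (hx : ∀ i, x i ≠ 0)
    (hne : ∀ i j, i ≠ j →
      c i * q^(n i) / x i ≠ c j * q^(n j) / x j)
    (hden : ∀ i j, qPI q (q * c j * x i / (c i * x j)) ≠ 0) :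
    ∏ i, ∏ j, qP q (q^(1 + n j - n i) * c j * x i / (c i * x j)) (n i - n j)
    = (-1 : ℂ)^(((r : ℤ) - 1) * ∑ t, n t) *
      q^(ch2 (∑ t, n t) - (r : ℤ) * ∑ i, ch2 (n i)) *
      (∏ i, (c i / x i)^((∑ t, n t) - (r : ℤ) * n i)) *
      (∏ i, ∏ j, if i < j then
          (c i / x i - c j / x j) /
          (c i * q^(n i) / x i - c j * q^(n j) / x j)
        else 1) := by
  have hm1 : (-1 : ℂ) ≠ 0 := by norm_num
  have hy0 : ∀ i, c i / x i ≠ 0 := fun i => div_ne_zero (hc i) (hx i)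
  -- diagonal terms are 1
  have hdiag : ∀ i : Fin r,
      qP q (q^(1 + n i - n i) * c i * x i / (c i * x i)) (n i - n i) = 1 := by
    intro i
    have harg : q^(1 + n i - n i) * c i * x i / (c i * x i)
        = q * c i * x i / (c i * x i) := by
      rw [show 1 + n i - n i = (1:ℤ) by ring, zpow_one]
    rw [qP, show n i - n i = (0:ℤ) by ring, zpow_zero, mul_one, harg, div_self (hden i i)]
  -- the pair formula
  have hpair : ∀ i j : Fin r, i < j →
      qP q (q^(1 + n j - n i) * c j * x i / (c i * x j)) (n i - n j)
      * qP q (q^(1 + n i - n j) * c i * x j / (c j * x i)) (n j - n i)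
      = (((-1:ℂ)^(n i + n j)
          * ((c j / x j) ^ (n i - n j) * (c i / x i) ^ (n j - n i)))
          * q ^ (n j - ch2 (n i - n j)))
        * ((c i / x i - c j / x j) / (c i * q^(n i) / x i - c j * q^(n j) / x j)) := by
    intro i j hij
    set u := (c j / x j) / (c i / x i) with hu_def
    set m := n i - n j with hm_def
    have hu : u ≠ 0 := div_ne_zero (hy0 j) (hy0 i)
    have huinv : u⁻¹ = (c i / x i) / (c j / x j) := by rw [hu_def, inv_div]
    have h1 : qPI q (q * u) ≠ 0 := by
      have hd := hden i j
      have e : q * c j * x i / (c i * x j) = q * u := by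
        rw [hu_def]; field_simp
      rwa [e] at hd
    have h2 : qPI q (q * u⁻¹) ≠ 0 := by
      have hd := hden j i
      have e : q * c i * x j / (c j * x i) = q * u⁻¹ := by
        rw [huinv]; field_simp
      rwa [e] at hd
    have hΔ : c i * q^(n i) / x i - c j * q^(n j) / x j ≠ 0 :=
      sub_ne_zero.mpr (hne i j (ne_of_lt hij))
    have eA : q^m * q^(n j) = q^(n i) := by
      rw [← zpow_add₀ hq, show m + n j = n i from by rw [hm_def]; ring]
    have eB : u * (c i / x i) = c j / x j := by
      rw [hu_def]; exact div_mul_cancel₀ _ (hy0 i)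
    have eΔ : c i * q^(n i) / x i - c j * q^(n j) / x j
        = q^(n j) * ((q^m - u) * (c i / x i)) := by
      linear_combination (-(c i / x i)) * eA + (q^(n j)) * eB
    have hqmu : q ^ m - u ≠ 0 := by
      intro h0
      apply hΔ
      rw [eΔ, h0]; ring
    have hkey := key_telescope q u hq hq1 hu h1 h2 m
    have hTij : qP q (q^(1 + n j - n i) * c j * x i / (c i * x j)) m
        = qPI q (q^(1 - m) * u) / qPI q (q * u) := by
      rw [qP]
      have e1 : q^(1 + n j - n i) * c j * x i / (c i * x j) = q^(1 - m) * u := by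
        rw [show 1 + n j - n i = 1 - m from by rw [hm_def]; ring, hu_def]
        field_simp
      have e2 : q^(1 - m) * u * q^m = q * u := by
        rw [show (q:ℂ)^(1-m) * u * q^m = (q^(1-m) * q^m) * u by ring, ← zpow_add₀ hq,
          show 1 - m + m = (1:ℤ) by ring, zpow_one]
      rw [e1, e2]
    have hTji : qP q (q^(1 + n i - n j) * c i * x j / (c j * x i)) (n j - n i)
        = qPI q (q^(1 + m) * u⁻¹) / qPI q (q * u⁻¹) := by
      rw [qP]
      have e1 : q^(1 + n i - n j) * c i * x j / (c j * x i) = q^(1 + m) * u⁻¹ := by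
        rw [show 1 + n i - n j = 1 + m from by rw [hm_def]; ring, huinv]
        field_simp
      have e2 : q^(1 + m) * u⁻¹ * q^(n j - n i) = q * u⁻¹ := by
        rw [show n j - n i = -m from by rw [hm_def]; ring,
          show (q:ℂ)^(1+m) * u⁻¹ * q^(-m) = (q^(1+m) * q^(-m)) * u⁻¹ by ring,
          ← zpow_add₀ hq, show 1 + m + -m = (1:ℤ) by ring, zpow_one]
      rw [e1, e2]
    have e1' : (-1:ℂ)^(n i + n j) = (-1:ℂ)^m := by
      rw [show n i + n j = m + 2 * n j from by rw [hm_def]; ring, zpow_add₀ hm1,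
        zpow_mul, show ((-1:ℂ))^(2:ℤ) = 1 by norm_num, one_zpow, mul_one]
    have hdpow : u ^ m = (c j / x j) ^ m / (c i / x i) ^ m := by
      rw [hu_def]; exact div_zpow _ _ _
    have e2' : (c j / x j) ^ (n i - n j) * (c i / x i) ^ (n j - n i) = u ^ m := by
      rw [show n j - n i = -m from by rw [hm_def]; ring, ← hm_def, hdpow, zpow_neg]
      exact (div_eq_mul_inv _ _).symm
    have e3' : q ^ (n j - ch2 m) * q ^ (ch2 m) = q ^ (n j) := by
      rw [← zpow_add₀ hq, show n j - ch2 m + ch2 m = n j by ring]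
    have hratio : (c i / x i - c j / x j) / (c i * q^(n i) / x i - c j * q^(n j) / x j)
        * (c i * q^(n i) / x i - c j * q^(n j) / x j) = c i / x i - c j / x j :=
      div_mul_cancel₀ _ hΔ
    rw [hTij, hTji, div_mul_div_comm, e1', e2', div_eq_iff (mul_ne_zero h1 h2)]
    apply mul_right_cancel₀ hΔ
    linear_combination (qPI q (q^(1 - m) * u) * qPI q (q^(1 + m) * u⁻¹)) * eΔ
      + ((c i / x i) * q ^ (n j - ch2 m)) * hkey
      + (-(qPI q (q^(1 - m) * u) * qPI q (q^(1 + m) * u⁻¹) * (q^m - u) * (c i / x i))) * e3'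
      + (-((-1:ℂ)^m * u^m * q^(n j - ch2 m) * (qPI q (q * u) * qPI q (q * u⁻¹)))) * eB
      + (-((-1:ℂ)^m * u^m * q^(n j - ch2 m) * (qPI q (q * u) * qPI q (q * u⁻¹)))) * hratio
  -- now assemble the double product
  rw [split_prod (fun i j =>
    qP q (q^(1 + n j - n i) * c j * x i / (c i * x j)) (n i - n j))]
  rw [Finset.prod_congr rfl fun i (_ : i ∈ Finset.univ) => hdiag i, Finset.prod_const_one,
    mul_one]
  calc (∏ i, ∏ j, if i < j then
          qP q (q^(1 + n j - n i) * c j * x i / (c i * x j)) (n i - n j)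
          * qP q (q^(1 + n i - n j) * c i * x j / (c j * x i)) (n j - n i) else 1)
      = ∏ i, ∏ j, (if i < j then
          (((-1:ℂ)^(n i + n j)
            * ((c j / x j) ^ (n i - n j) * (c i / x i) ^ (n j - n i)))
            * q ^ (n j - ch2 (n i - n j)))
          * ((c i / x i - c j / x j) / (c i * q^(n i) / x i - c j * q^(n j) / x j))
          else 1) := by
        refine Finset.prod_congr rfl fun i _ => Finset.prod_congr rfl fun j _ => ?_
        by_cases h : i < j
        · rw [if_pos h, if_pos h, hpair i j h]
        · rw [if_neg h, if_neg h]
    _ = ∏ i, ∏ j, ((((if i < j then (-1:ℂ)^(n i + n j) else 1)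
            * ((if i < j then (c j / x j) ^ (n i - n j) else 1)
              * (if i < j then (c i / x i) ^ (n j - n i) else 1)))
            * (if i < j then q ^ (n j - ch2 (n i - n j)) else 1))
          * (if i < j then
              (c i / x i - c j / x j) / (c i * q^(n i) / x i - c j * q^(n j) / x j)
            else 1)) := by
        refine Finset.prod_congr rfl fun i _ => Finset.prod_congr rfl fun j _ => ?_
        split <;> simp
    _ = (((∏ i, ∏ j, if i < j then (-1:ℂ)^(n i + n j) else 1)
            * ((∏ i, ∏ j, if i < j then (c j / x j) ^ (n i - n j) else 1)
              * (∏ i, ∏ j, if i < j then (c i / x i) ^ (n j - n i) else 1)))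
            * (∏ i, ∏ j, if i < j then q ^ (n j - ch2 (n i - n j)) else 1))
          * (∏ i, ∏ j, if i < j then
              (c i / x i - c j / x j) / (c i * q^(n i) / x i - c j * q^(n j) / x j)
            else 1) := by
        simp only [Finset.prod_mul_distrib]
    _ = (-1 : ℂ)^(((r : ℤ) - 1) * ∑ t, n t) *
        q^(ch2 (∑ t, n t) - (r : ℤ) * ∑ i, ch2 (n i)) *
        (∏ i, (c i / x i)^((∑ t, n t) - (r : ℤ) * n i)) *
        (∏ i, ∏ j, if i < j then
            (c i / x i - c j / x j) /
            (c i * q^(n i) / x i - c j * q^(n j) / x j)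
          else 1) := by
        have hPA : (∏ i, ∏ j, if i < j then (-1:ℂ)^(n i + n j) else 1)
            = (-1:ℂ)^(((r : ℤ) - 1) * ∑ t, n t) := by
          calc (∏ i, ∏ j, if i < j then (-1:ℂ)^(n i + n j) else 1)
              = ∏ i, ∏ j, (-1:ℂ)^(if i < j then n i + n j else 0) :=
                Finset.prod_congr rfl fun i _ => Finset.prod_congr rfl fun j _ =>
                  ite_zpow _ _ _
            _ = ∏ i : Fin r, (-1:ℂ)^(∑ j, if i < j then n i + n j else 0) :=
                Finset.prod_congr rfl fun i _ => zpow_prod _ hm1 _ _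
            _ = (-1:ℂ)^(∑ i, ∑ j, if i < j then n i + n j else 0) := zpow_prod _ hm1 _ _
            _ = (-1:ℂ)^(((r : ℤ) - 1) * ∑ t, n t) := by rw [sum_lt_add]
        have hPC : (∏ i, ∏ j, if i < j then q ^ (n j - ch2 (n i - n j)) else 1)
            = q^(ch2 (∑ t, n t) - (r : ℤ) * ∑ i, ch2 (n i)) := by
          calc (∏ i, ∏ j, if i < j then q ^ (n j - ch2 (n i - n j)) else 1)
              = ∏ i, ∏ j, q^(if i < j then n j - ch2 (n i - n j) else 0) :=
                Finset.prod_congr rfl fun i _ => Finset.prod_congr rfl fun j _ =>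
                  ite_zpow _ _ _
            _ = ∏ i : Fin r, q^(∑ j, if i < j then n j - ch2 (n i - n j) else 0) :=
                Finset.prod_congr rfl fun i _ => zpow_prod _ hq _ _
            _ = q^(∑ i, ∑ j, if i < j then n j - ch2 (n i - n j) else 0) := zpow_prod _ hq _ _
            _ = q^(ch2 (∑ t, n t) - (r : ℤ) * ∑ i, ch2 (n i)) := by rw [sum_lt_q]
        have hPB1 : (∏ i, ∏ j, if i < j then (c j / x j) ^ (n i - n j) else 1)
            = ∏ k : Fin r, (c k / x k) ^ (∑ t, if t < k then n t - n k else 0) := by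
          rw [Finset.prod_comm]
          refine Finset.prod_congr rfl fun k _ => ?_
          rw [Finset.prod_congr rfl fun t (_ : t ∈ Finset.univ) => ite_zpow (c k / x k) (t < k) (n t - n k),
            zpow_prod _ (hy0 k)]
        have hPB2 : (∏ i, ∏ j, if i < j then (c i / x i) ^ (n j - n i) else 1)
            = ∏ k : Fin r, (c k / x k) ^ (∑ t, if k < t then n t - n k else 0) := by
          refine Finset.prod_congr rfl fun k _ => ?_
          rw [Finset.prod_congr rfl fun t (_ : t ∈ Finset.univ) => ite_zpow (c k / x k) (k < t) (n t - n k),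
            zpow_prod _ (hy0 k)]
        have hPB : (∏ i, ∏ j, if i < j then (c j / x j) ^ (n i - n j) else 1)
            * (∏ i, ∏ j, if i < j then (c i / x i) ^ (n j - n i) else 1)
            = ∏ k : Fin r, (c k / x k) ^ ((∑ t, n t) - (r : ℤ) * n k) := by
          rw [hPB1, hPB2, ← Finset.prod_mul_distrib]
          refine Finset.prod_congr rfl fun k _ => ?_
          rw [← zpow_add₀ (hy0 k), exp_y n k]
        rw [hPA, hPC, hPB]
        ring
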